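/- In the abstract framework: for u adapted, square-integrable, with π_τ u = 0, and L = d(W^u ν)/dν, the map W^u is ν-a.s. left-invertible if and only if E_ν[L log L | F_τ] = (1/2) E_ν[|u|_H² | F_τ] ν-a.s. -/

import Mathlib

open MeasureTheory

/-! Conditional expectation preserves integrals, so the conditional identity integrates to the
unconditional entropy criterion; conversely, the conditional inequality together with equal
integrals forces a.s. equality. -/

theorem condExp_ae_eq_iff_integral_eq_of_ae_le {Ω : Type*} {m m₀ : MeasurableSpace Ω}
    {μ : Measure Ω} (hm : m ≤ m₀) [SigmaFinite (μ.trim hm)] {f g : Ω → ℝ}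
    (hg : Integrable g μ) (hle : μ[f|m] ≤ᵐ[μ] g) :
    μ[f|m] =ᵐ[μ] g ↔ ∫ w, f w ∂μ = ∫ w, g w ∂μ := by
  rw [← integral_condExp hm (f := f)]
  exact (integral_eq_iff_of_ae_le integrable_condExp hg hle).symm

theorem conditional_entropic_invertibility_criterion_general {Ω : Type*}
    {m : MeasurableSpace Ω}
    (ℱ : Filtration ℝ m) (ν : Measure Ω) [IsProbabilityMeasure ν]
    {τ : Ω → ℝ} (hτ : IsStoppingTime ℱ (fun w => (τ w : WithTop ℝ)))
    (Wu : Ω → Ω)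
    (L : Ω → ℝ)
    (nu2 : Ω → ℝ)
    -- (a) unconditional entropy criterion
    (hcrit : (∃ V : Ω → Ω, Measurable V ∧ (fun w => V (Wu w)) =ᵐ[ν] fun w => w)
      ↔ ∫ w, L w * Real.log (L w) ∂ν = (1/2) * ∫ w, nu2 w ∂ν)
    -- (c) conditional entropy inequality
    (hineq : ∀ᵐ w ∂ν, (ν[fun w => L w * Real.log (L w)|hτ.measurableSpace]) w
      ≤ (1/2) * (ν[nu2|hτ.measurableSpace]) w) :
    (∃ V : Ω → Ω, Measurable V ∧ (fun w => V (Wu w)) =ᵐ[ν] fun w => w)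
      ↔ (ν[fun w => L w * Real.log (L w)|hτ.measurableSpace]
          =ᵐ[ν] fun w => (1/2) * (ν[nu2|hτ.measurableSpace]) w) := by
  have hm := hτ.measurableSpace_le
  have half_integral :
      ∫ w, (1/2) * (ν[nu2|hτ.measurableSpace]) w ∂ν = (1/2) * ∫ w, nu2 w ∂ν := by
    rw [integral_const_mul, integral_condExp hm]
  rw [hcrit, condExp_ae_eq_iff_integral_eq_of_ae_le hm (integrable_condExp.const_mul _) hineq,
    half_integral]

/-- Conditional entropic criterion of invertibility: for a square-integrable
adapted shift `u` with `π_τ u = 0` and `L = d(W^u ν)/dν`, the map `W^u` is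
ν-a.s. left-invertible iff `E_ν[L log L|F_τ] = (1/2) E_ν[|u|²_H|F_τ]` ν-a.s.
The stochastic-analysis ingredients (unconditional entropy criterion, the
identity `L∘W^u · ρ(-δ_β u) = 1` under invertibility, and nullity of the
conditional expectation of the stochastic integral) are given as hypotheses. -/
theorem conditional_entropic_invertibility_criterion {Ω : Type*}
    {m : MeasurableSpace Ω} {d : ℕ}
    (ℱ : Filtration ℝ m) (ν : Measure Ω) [IsProbabilityMeasure ν]
    {τ : Ω → ℝ} (hτ : IsStoppingTime ℱ (fun w => (τ w : WithTop ℝ)))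
    (Wu : Ω → Ω) (hWu : Measurable Wu)
    (hac : Measure.map Wu ν ≪ ν) (hac' : ν ≪ Measure.map Wu ν)
    (L : Ω → ℝ) (hL : ∀ᵐ w ∂ν, L w = ((Measure.map Wu ν).rnDeriv ν w).toReal)
    (u' : ℝ → Ω → EuclideanSpace ℝ (Fin d)) (hu'ad : Adapted ℱ u')
    (hπτ : ∀ᵐ w ∂ν, ∀ᵐ s ∂(volume : Measure ℝ), s ≤ τ w → u' s w = 0)
    (nu2 : Ω → ℝ) (hnu2 : ∀ w, nu2 w = ∫ s in (0:ℝ)..1, ‖u' s w‖^2)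
    (hnu2int : Integrable nu2 ν)
    (I : Ω → ℝ)  -- δ_β u
    (hIcond : ν[I|hτ.measurableSpace] =ᵐ[ν] fun _ => 0)
    -- (a) unconditional entropy criterion
    (hcrit : (∃ V : Ω → Ω, Measurable V ∧ (fun w => V (Wu w)) =ᵐ[ν] fun w => w)
      ↔ ∫ w, L w * Real.log (L w) ∂ν = (1/2) * ∫ w, nu2 w ∂ν)
    -- (b) if left-invertible, L∘W^u · ρ(-δ_β u) = 1 a.s.
    (hid : (∃ V : Ω → Ω, Measurable V ∧ (fun w => V (Wu w)) =ᵐ[ν] fun w => w) →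
      (fun w => L (Wu w) * Real.exp (- I w - (1/2) * nu2 w)) =ᵐ[ν] fun _ => 1)
    -- (c) conditional entropy inequality
    (hineq : ∀ᵐ w ∂ν, (ν[fun w => L w * Real.log (L w)|hτ.measurableSpace]) w
      ≤ (1/2) * (ν[nu2|hτ.measurableSpace]) w) :
    (∃ V : Ω → Ω, Measurable V ∧ (fun w => V (Wu w)) =ᵐ[ν] fun w => w)
      ↔ (ν[fun w => L w * Real.log (L w)|hτ.measurableSpace]
          =ᵐ[ν] fun w => (1/2) * (ν[nu2|hτ.measurableSpace]) w) :=
  conditional_entropic_invertibility_criterion_general ℱ ν hτ Wu L nu2 hcrit hineq
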